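/- Let P be a 2×2 matrix of Laurent polynomials over ℂ with det(P) not identically zero and gcd of the four entries equal to 1 (no nontrivial common factor). Suppose V and V̊ are 2×2 Laurent polynomial matrices with V(z)V*(z) = P(z) = V̊(z)V̊*(z) for all z ∈ ℂ∖{0}, and det(V̊(z)) = λ z^k det(V(z)) for some λ ∈ ℂ∖{0}, k ∈ ℤ. Then there exists a 2×2 paraunitary matrix U of Laurent polynomials (U(z)U*(z) = I₂ on ℂ∖{0}) with det(U(z)) = λ z^k and V̊(z) = V(z)U(z). -/

import Mathlib

noncomputable section
open LaurentPolynomial Matrix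

/-- The adjoint (star) of a Laurent polynomial: (Σ u(k)zᵏ)⋆ = Σ conj(u(k)) z⁻ᵏ. -/
def lstar (p : LaurentPolynomial ℂ) : LaurentPolynomial ℂ :=
  p.coeff.sum fun k c => LaurentPolynomial.C (starRingEnd ℂ c) * LaurentPolynomial.T (-k)

/-- Evaluation of a Laurent polynomial at a nonzero complex number. -/
def leval (z : ℂ) (p : LaurentPolynomial ℂ) : ℂ :=
  p.coeff.sum fun k c => c * z ^ k

/-- Substitution z ↦ -z in a Laurent polynomial. -/
def nsub (p : LaurentPolynomial ℂ) : LaurentPolynomial ℂ :=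
  p.coeff.sum fun k c => LaurentPolynomial.C (c * (-1 : ℂ) ^ k) * LaurentPolynomial.T k

/-- Substitution z ↦ z² in a Laurent polynomial. -/
def ssub (p : LaurentPolynomial ℂ) : LaurentPolynomial ℂ :=
  p.coeff.sum fun k c => LaurentPolynomial.C c * LaurentPolynomial.T (2 * k)

/-- Entrywise evaluation of a matrix of Laurent polynomials. -/
def meval {m n : ℕ} (z : ℂ) (M : Matrix (Fin m) (Fin n) (LaurentPolynomial ℂ)) :
    Matrix (Fin m) (Fin n) ℂ :=
  M.map (leval z)

/-- Star-adjoint transpose of a matrix of Laurent polynomials. -/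
def mstar {m n : ℕ} (M : Matrix (Fin m) (Fin n) (LaurentPolynomial ℂ)) :
    Matrix (Fin n) (Fin m) (LaurentPolynomial ℂ) :=
  (M.map lstar)ᵀ

/-- The γ-coset of a Laurent polynomial: coefficient of zᵏ is the coefficient of z^{γ+2k}. -/
def coset (γ : ℤ) (p : LaurentPolynomial ℂ) : LaurentPolynomial ℂ :=
  p.coeff.sum fun k c => if (k - γ) % 2 = 0 then LaurentPolynomial.C c * LaurentPolynomial.T ((k - γ) / 2) else 0

/-!
Over the fraction field the only candidate is `U = V⁻¹ V'`, and `U U⋆ = 1`, `det U = λ zᵏ`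
follow formally from `V V⋆ = V' V'⋆`; the content is that `d = det V` divides every entry of
`adj V * V'`. Cramer's rule in dimension two writes each product `(adj V * V')ᵢⱼ Pₖₗ` as a
combination of entries of `adj V * P = d • V⋆` and `adj V' * P = det V' • V'⋆`, all multiples of `d`.
As `ℂ[z, z⁻¹]` is a principal ideal domain, the gcd condition says that the entries of `P`
generate the unit ideal, so `d` divides `(adj V * V')ᵢⱼ` itself.
-/

theorem dvd_of_forall_dvd_mul_of_span_eq_top {R ι : Type*} [CommRing R] [Fintype ι] {q : ι → R}
    (hq : Ideal.span (Set.range q) = ⊤) {d w : R} (h : ∀ i, d ∣ w * q i) : d ∣ w := by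
  obtain ⟨c, hc⟩ := Ideal.mem_span_range_iff_exists_fun.mp (hq ▸ Submodule.mem_top : (1 : R) ∈ _)
  rw [← mul_one w, ← hc, Finset.mul_sum]
  exact Finset.dvd_sum fun i _ => ((h i).mul_left (c i)).trans (by rw [mul_left_comm])

theorem Ideal.span_range_eq_top_of_forall_dvd_isUnit {R ι : Type*} [CommRing R]
    [IsPrincipalIdealRing R] {q : ι → R} (h : ∀ g, (∀ i, g ∣ q i) → IsUnit g) :
    Ideal.span (Set.range q) = ⊤ := by
  set g := Submodule.IsPrincipal.generator (Ideal.span (Set.range q))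
  have hg : Ideal.span {g} = Ideal.span (Set.range q) := Ideal.span_singleton_generator _
  rw [← hg, Ideal.span_singleton_eq_top]
  exact h g fun i => Ideal.mem_span_singleton.mp (hg ▸ Ideal.subset_span ⟨i, rfl⟩)

theorem IsLocalization.isPrincipalIdealRing {R S : Type*} [CommRing R] [CommRing S] [Algebra R S]
    (M : Submonoid R) [IsLocalization M S] [IsPrincipalIdealRing R] : IsPrincipalIdealRing S :=
  ⟨fun J => IsLocalization.map_under M S J ▸ (IsPrincipalIdealRing.principal _).map_ringHom _⟩

instance {K : Type*} [Field K] : IsPrincipalIdealRing (LaurentPolynomial K) :=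
  IsLocalization.isPrincipalIdealRing (Submonoid.powers (Polynomial.X : Polynomial K))

namespace Matrix

section CommRing

variable {R : Type*} [CommRing R]

/- Entrywise form of Cramer's rule `det[u, w] • p = det[p, w] • u + det[u, p] • w` in `R²`: the
entries of `adj A * B` are the determinants `± det[column of A, column of B]`. -/
theorem adjugate_mul_apply_mul_apply (V V' P : Matrix (Fin 2) (Fin 2) R) (i j k l : Fin 2) :
    (V.adjugate * V') i j * P k l =
      (V.adjugate * P) i l * V' k j +
        (if i = j then 1 else -1) * (V'.adjugate * P) j.rev l * V k i.rev := by
  fin_cases i <;> fin_cases j <;> fin_cases k <;> fin_cases l <;>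
    simp [adjugate_fin_two, mul_apply, Fin.sum_univ_two] <;> ring

theorem det_dvd_adjugate_mul_apply {V V' X Y P : Matrix (Fin 2) (Fin 2) R}
    (hX : V * X = P) (hY : V' * Y = P) (hdet : V.det ∣ V'.det)
    (hP : Ideal.span (Set.range fun kl : Fin 2 × Fin 2 => P kl.1 kl.2) = ⊤) (i j : Fin 2) :
    V.det ∣ (V.adjugate * V') i j := by
  have hVP : V.adjugate * P = V.det • X := by
    rw [← hX, ← Matrix.mul_assoc, adjugate_mul, smul_mul, Matrix.one_mul]
  have hV'P : V'.adjugate * P = V'.det • Y := by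
    rw [← hY, ← Matrix.mul_assoc, adjugate_mul, smul_mul, Matrix.one_mul]
  refine dvd_of_forall_dvd_mul_of_span_eq_top hP fun ⟨k, l⟩ => ?_
  rw [adjugate_mul_apply_mul_apply, hVP, hV'P]
  exact dvd_add ((Dvd.intro _ rfl).mul_right _)
    (((hdet.trans (Dvd.intro _ rfl)).mul_left _).mul_right _)

variable (σ : R →+* R)

theorem transpose_mapMatrix_mul {n : Type*} [Fintype n] [DecidableEq n] (A B : Matrix n n R) :
    (σ.mapMatrix (A * B))ᵀ = (σ.mapMatrix B)ᵀ * (σ.mapMatrix A)ᵀ := by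
  rw [map_mul, transpose_mul]

theorem transpose_mapMatrix_smul {n : Type*} [Fintype n] [DecidableEq n] (c : R)
    (A : Matrix n n R) : (σ.mapMatrix (c • A))ᵀ = σ c • (σ.mapMatrix A)ᵀ := by
  ext; simp

end CommRing

theorem exists_eq_mul_of_mul_transpose_mapMatrix_eq {R : Type*} [CommRing R] [IsDomain R]
    (σ : R →+* R) {V V' P : Matrix (Fin 2) (Fin 2) R}
    (hV : V * (σ.mapMatrix V)ᵀ = P) (hV' : V' * (σ.mapMatrix V')ᵀ = P) (hP : P.det ≠ 0)
    (hspan : Ideal.span (Set.range fun kl : Fin 2 × Fin 2 => P kl.1 kl.2) = ⊤)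
    {u : R} (hdet : V'.det = u * V.det) :
    ∃ U : Matrix (Fin 2) (Fin 2) R, U * (σ.mapMatrix U)ᵀ = 1 ∧ U.det = u ∧ V' = V * U := by
  set d := V.det
  have hdetP : P.det = d * σ d := by
    rw [← hV, det_mul, det_transpose, RingHom.map_det]
  have hd : d ≠ 0 := left_ne_zero_of_mul (hdetP ▸ hP)
  have hσd : σ d ≠ 0 := right_ne_zero_of_mul (hdetP ▸ hP)
  choose U hU using det_dvd_adjugate_mul_apply hV hV' (Dvd.intro_left u hdet.symm) hspan
  have hW : V.adjugate * V' = d • of U := ext fun i j => hU i j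
  refine ⟨of U, ?_, ?_, ?_⟩
  · apply smul_right_injective _ (mul_ne_zero hd hσd)
    calc (d * σ d) • (of U * (σ.mapMatrix (of U))ᵀ)
        = V.adjugate * V' * (σ.mapMatrix (V.adjugate * V'))ᵀ := by
          rw [hW, transpose_mapMatrix_smul, smul_mul, Matrix.mul_smul, smul_smul]
      _ = V.adjugate * V * (σ.mapMatrix (V.adjugate * V))ᵀ := by
          simp only [transpose_mapMatrix_mul, Matrix.mul_assoc]
          rw [← Matrix.mul_assoc V', hV', ← hV, Matrix.mul_assoc]
      _ = (d * σ d) • 1 := by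
          rw [adjugate_mul, transpose_mapMatrix_smul, map_one, transpose_one, smul_mul,
            Matrix.mul_smul, smul_smul, Matrix.one_mul]
  · apply mul_left_cancel₀ (pow_ne_zero 2 hd)
    have hdetW := congrArg det hW
    rw [det_mul, det_adjugate, det_smul, hdet, Fintype.card_fin] at hdetW
    linear_combination -hdetW
  · apply smul_right_injective _ hd
    change d • V' = d • (V * of U)
    rw [← Matrix.mul_smul, ← hW, ← Matrix.mul_assoc, mul_adjugate, smul_mul, Matrix.one_mul]

end Matrix

def lstarHom : LaurentPolynomial ℂ →+* LaurentPolynomial ℂ :=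
  invert.toRingHom.comp (AddMonoidAlgebra.mapRingHom ℤ (starRingEnd ℂ))

theorem lstar_eq_lstarHom (p : LaurentPolynomial ℂ) : lstar p = lstarHom p := by
  induction p using LaurentPolynomial.induction_on' with
  | add p q hp hq =>
    rw [map_add, ← hp, ← hq, lstar, lstar, lstar, AddMonoidAlgebra.coeff_add,
      Finsupp.sum_add_index] <;> simp [add_mul]
  | C_mul_T n a =>
    rw [← single_eq_C_mul_T, lstar, AddMonoidAlgebra.coeff_single,
      Finsupp.sum_single_index (by simp), lstarHom, RingHom.comp_apply,
      AddMonoidAlgebra.mapRingHom_single]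
    simp [single_eq_C_mul_T]

-- `_root_.leval`: the open namespace `LaurentPolynomial` has a `leval` of its own.
theorem leval_eq_eval₂ {z : ℂ} (hz : z ≠ 0) (p : LaurentPolynomial ℂ) :
    _root_.leval z p = eval₂ (RingHom.id ℂ) (Units.mk0 z hz) p := by
  induction p using LaurentPolynomial.induction_on' with
  | add p q hp hq =>
    rw [map_add, ← hp, ← hq, _root_.leval, _root_.leval, _root_.leval,
      AddMonoidAlgebra.coeff_add, Finsupp.sum_add_index] <;> simp [add_mul]
  | C_mul_T n a =>
    rw [← single_eq_C_mul_T, _root_.leval, AddMonoidAlgebra.coeff_single,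
      Finsupp.sum_single_index (by simp)]
    simp [single_eq_C_mul_T]

theorem eq_zero_of_forall_leval_eq_zero {p : LaurentPolynomial ℂ}
    (h : ∀ z : ℂ, z ≠ 0 → _root_.leval z p = 0) : p = 0 := by
  obtain ⟨n, q, hq⟩ := p.exists_T_pow
  have hroots : {z : ℂ | z ≠ 0} ⊆ {z | q.IsRoot z} := fun z hz => by
    have hqz := congrArg (eval₂ (RingHom.id ℂ) (Units.mk0 z hz)) hq
    rwa [eval₂_toLaurent, Polynomial.eval₂_id, map_mul, ← leval_eq_eval₂, h z hz,
      zero_mul] at hqz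
  have hq0 : q = 0 :=
    Polynomial.eq_zero_of_infinite_isRoot q ((Set.finite_singleton 0).infinite_compl.mono hroots)
  rwa [hq0, map_zero, eq_comm, (isUnit_T _).mul_left_eq_zero] at hq

theorem meval_eq_map_eval₂ {m n : ℕ} {z : ℂ} (hz : z ≠ 0)
    (M : Matrix (Fin m) (Fin n) (LaurentPolynomial ℂ)) :
    meval z M = M.map (eval₂ (RingHom.id ℂ) (Units.mk0 z hz)) := by
  ext; simp [meval, leval_eq_eval₂ hz]

theorem meval_mul {l m n : ℕ} {z : ℂ} (hz : z ≠ 0)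
    (A : Matrix (Fin l) (Fin m) (LaurentPolynomial ℂ))
    (B : Matrix (Fin m) (Fin n) (LaurentPolynomial ℂ)) :
    meval z (A * B) = meval z A * meval z B := by
  simp only [meval_eq_map_eval₂ hz, Matrix.map_mul]

theorem meval_one {n : ℕ} {z : ℂ} (hz : z ≠ 0) :
    meval z (1 : Matrix (Fin n) (Fin n) (LaurentPolynomial ℂ)) = 1 := by
  rw [meval_eq_map_eval₂ hz, Matrix.map_one _ (map_zero _) (map_one _)]

theorem eq_of_forall_meval_eq {m n : ℕ} {M N : Matrix (Fin m) (Fin n) (LaurentPolynomial ℂ)}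
    (h : ∀ z : ℂ, z ≠ 0 → meval z M = meval z N) : M = N := by
  refine Matrix.ext fun i j => sub_eq_zero.mp (eq_zero_of_forall_leval_eq_zero fun z hz => ?_)
  have hij := congrFun (congrFun (h z hz) i) j
  simp only [meval_eq_map_eval₂ hz, Matrix.map_apply] at hij
  rw [leval_eq_eval₂ hz, map_sub, hij, sub_self]

theorem mstar_eq_transpose_mapMatrix {n : ℕ} (M : Matrix (Fin n) (Fin n) (LaurentPolynomial ℂ)) :
    mstar M = (lstarHom.mapMatrix M)ᵀ := by
  ext; simp [mstar, lstar_eq_lstarHom]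

theorem stmt15_general (P V V' : Matrix (Fin 2) (Fin 2) (LaurentPolynomial ℂ))
    (hdP : P.det ≠ 0)
    (hgcd : ∀ q : LaurentPolynomial ℂ, (∀ i j, q ∣ P i j) → IsUnit q)
    (hV : ∀ z : ℂ, z ≠ 0 → meval z V * meval z (mstar V) = meval z P)
    (hV' : ∀ z : ℂ, z ≠ 0 → meval z V' * meval z (mstar V') = meval z P)
    (l : ℂ) (k : ℤ)
    (hdet : V'.det = LaurentPolynomial.C l * LaurentPolynomial.T k * V.det) :
    ∃ U : Matrix (Fin 2) (Fin 2) (LaurentPolynomial ℂ),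
      (∀ z : ℂ, z ≠ 0 → meval z U * meval z (mstar U) = 1) ∧
      U.det = LaurentPolynomial.C l * LaurentPolynomial.T k ∧
      V' = V * U := by
  have hVP : V * mstar V = P := eq_of_forall_meval_eq fun z hz => by rw [meval_mul hz, hV z hz]
  have hV'P : V' * mstar V' = P := eq_of_forall_meval_eq fun z hz => by rw [meval_mul hz, hV' z hz]
  have hspan : Ideal.span (Set.range fun ij : Fin 2 × Fin 2 => P ij.1 ij.2) = ⊤ :=
    Ideal.span_range_eq_top_of_forall_dvd_isUnit fun q hq => hgcd q fun i j => hq (i, j)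
  rw [mstar_eq_transpose_mapMatrix] at hVP hV'P
  obtain ⟨U, hUU, hdetU, hVU⟩ :=
    Matrix.exists_eq_mul_of_mul_transpose_mapMatrix_eq lstarHom hVP hV'P hdP hspan hdet
  refine ⟨U, fun z hz => ?_, hdetU, hVU⟩
  rw [← meval_mul hz, mstar_eq_transpose_mapMatrix, hUU, meval_one hz]

theorem stmt15 (P V V' : Matrix (Fin 2) (Fin 2) (LaurentPolynomial ℂ))
    (hdP : P.det ≠ 0)
    (hgcd : ∀ q : LaurentPolynomial ℂ, (∀ i j, q ∣ P i j) → IsUnit q)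
    (hV : ∀ z : ℂ, z ≠ 0 → meval z V * meval z (mstar V) = meval z P)
    (hV' : ∀ z : ℂ, z ≠ 0 → meval z V' * meval z (mstar V') = meval z P)
    (l : ℂ) (k : ℤ) (hl : l ≠ 0)
    (hdet : V'.det = LaurentPolynomial.C l * LaurentPolynomial.T k * V.det) :
    ∃ U : Matrix (Fin 2) (Fin 2) (LaurentPolynomial ℂ),
      (∀ z : ℂ, z ≠ 0 → meval z U * meval z (mstar U) = 1) ∧
      U.det = LaurentPolynomial.C l * LaurentPolynomial.T k ∧
      V' = V * U :=
  stmt15_general P V V' hdP hgcd hV hV' l k hdet
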